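/- arXiv:2209.09150 — 2 statements merged into one kernel-verified Lean document; each statement's English description precedes it below -/
import Mathlib

section
/- Let n > 3. The Lie algebra of derivations of the Poisson algebra P₁,₁ⁿ has dimension n+2. -/
open scoped BigOperators

/-- The bilinear map on `Fin n → ℂ` determined by structure constants `c`. -/
noncomputable def sb {n : ℕ} (c : Fin n → Fin n → Fin n → ℂ) :
    (Fin n → ℂ) →ₗ[ℂ] (Fin n → ℂ) →ₗ[ℂ] (Fin n → ℂ) :=
  LinearMap.mk₂ ℂ (fun x y k => ∑ a, ∑ b, c a b k * (x a * y b))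
    (fun x x' y => by
      funext k
      simp [add_mul, mul_add, Finset.sum_add_distrib])
    (fun r x y => by
      funext k
      simp only [Pi.smul_apply, smul_eq_mul, Finset.mul_sum]
      exact Finset.sum_congr rfl fun a _ => Finset.sum_congr rfl fun b _ => by ring)
    (fun x y y' => by
      funext k
      simp [mul_add, Finset.sum_add_distrib])
    (fun r x y => by
      funext k
      simp only [Pi.smul_apply, smul_eq_mul, Finset.mul_sum]
      exact Finset.sum_congr rfl fun a _ => Finset.sum_congr rfl fun b _ => by ring)

/-- The Lie algebra (here: submodule) of derivations of the Poisson algebra on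
`Fin n → ℂ` with multiplication `m` and bracket `b`. -/
noncomputable def derivs {n : ℕ}
    (m b : (Fin n → ℂ) →ₗ[ℂ] (Fin n → ℂ) →ₗ[ℂ] (Fin n → ℂ)) :
    Submodule ℂ ((Fin n → ℂ) →ₗ[ℂ] (Fin n → ℂ)) where
  carrier := {φ | (∀ x y, φ (m x y) = m (φ x) y + m x (φ y)) ∧
      (∀ x y, φ (b x y) = b (φ x) y + b x (φ y))}
  add_mem' := by
    rintro φ ψ ⟨h1, h2⟩ ⟨g1, g2⟩
    refine ⟨fun x y => ?_, fun x y => ?_⟩ <;>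
      simp only [LinearMap.add_apply, map_add, h1, h2, g1, g2] <;> abel
  zero_mem' := by
    refine ⟨fun x y => ?_, fun x y => ?_⟩ <;> simp
  smul_mem' := by
    rintro r φ ⟨h1, h2⟩
    refine ⟨fun x y => ?_, fun x y => ?_⟩ <;>
      simp only [LinearMap.smul_apply, map_smul, h1, h2, smul_add]

/-- Multiplication of `P₁,₁ⁿ`: `e_i · e_j = e_{i+j}` for `2 ≤ i+j ≤ n−1`,
`i,j ≤ n−1`; all other products of basis vectors are zero. -/
noncomputable def mu11 (n : ℕ) : (Fin n → ℂ) →ₗ[ℂ] (Fin n → ℂ) →ₗ[ℂ] (Fin n → ℂ) :=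
  sb (fun a b k => if (a : ℕ) + (b : ℕ) + 1 = (k : ℕ) ∧ (k : ℕ) + 2 ≤ n then 1 else 0)

noncomputable def E (n : ℕ) (j : ℕ) : Fin n → ℂ := fun k => if (k : ℕ) = j then 1 else 0

lemma E_single {n : ℕ} (p : Fin n) : E n p = Pi.single p 1 := by
  funext k
  simp only [E, Pi.single_apply, Fin.val_eq_val]

lemma mu11_apply {n : ℕ} (x y : Fin n → ℂ) (k : Fin n) :
    mu11 n x y k = ∑ a : Fin n, ∑ b : Fin n,
      (if (a : ℕ) + (b : ℕ) + 1 = (k : ℕ) ∧ (k : ℕ) + 2 ≤ n then 1 else 0) * (x a * y b) := rfl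

lemma sum_if_val {n : ℕ} (p : ℕ) (f : Fin n → ℂ) :
    (∑ a : Fin n, if (a : ℕ) = p then f a else 0) = if h : p < n then f ⟨p, h⟩ else 0 := by
  split_ifs with h
  · rw [Finset.sum_eq_single (⟨p, h⟩ : Fin n)]
    · simp
    · intro a _ ha
      rw [if_neg]
      exact fun hc => ha (Fin.ext hc)
    · simp
  · apply Finset.sum_eq_zero
    intro a _
    rw [if_neg]
    have := a.isLt
    omega

lemma mu11_E {n : ℕ} (p q : ℕ) :
    mu11 n (E n p) (E n q) = if p + q + 3 ≤ n then E n (p + q + 1) else 0 := by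
  funext k
  rw [mu11_apply]
  have step : ∀ a b : Fin n,
      (if (a : ℕ) + (b : ℕ) + 1 = (k : ℕ) ∧ (k : ℕ) + 2 ≤ n then (1:ℂ) else 0) *
        (E n p a * E n q b)
      = if (a : ℕ) = p then (if (b : ℕ) = q then
          (if p + q + 1 = (k : ℕ) ∧ (k : ℕ) + 2 ≤ n then 1 else 0) else 0) else 0 := by
    intro a b
    simp only [E]
    split_ifs <;> simp_all
  simp only [step]
  have inner : ∀ a : Fin n,
      (∑ b : Fin n, if (a : ℕ) = p then (if (b : ℕ) = q then
          (if p + q + 1 = (k : ℕ) ∧ (k : ℕ) + 2 ≤ n then (1:ℂ) else 0) else 0) else 0)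
      = if (a : ℕ) = p then (if _ : q < n then
          (if p + q + 1 = (k : ℕ) ∧ (k : ℕ) + 2 ≤ n then (1:ℂ) else 0) else 0) else 0 := by
    intro a
    by_cases h : (a : ℕ) = p
    · simp only [h, if_true]
      exact sum_if_val q _
    · simp [h]
  simp only [inner]
  rw [sum_if_val p (fun _ => _)]
  have hk := k.isLt
  by_cases hc : p + q + 3 ≤ n
  · rw [if_pos hc]
    simp only [E]
    split_ifs <;> first | rfl | (exfalso; omega)
  · rw [if_neg hc]
    simp only [Pi.zero_apply]
    split_ifs <;> first | rfl | (exfalso; omega)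

noncomputable def Dm (n : ℕ) (i : Fin n) : (Fin n → ℂ) →ₗ[ℂ] (Fin n → ℂ) where
  toFun x := fun k => if h : (i : ℕ) ≤ (k : ℕ) ∧ (k : ℕ) + 2 ≤ n
    then (((k : ℕ) - (i : ℕ) + 1 : ℕ) : ℂ) *
      x ⟨(k : ℕ) - (i : ℕ), Nat.lt_of_le_of_lt (Nat.sub_le _ _) k.isLt⟩ else 0
  map_add' x y := by
    funext k
    simp only [Pi.add_apply]
    split_ifs <;> first | ring | simp
  map_smul' c x := by
    funext k
    simp only [Pi.smul_apply, smul_eq_mul, RingHom.id_apply]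
    split_ifs <;> first | ring | simp

lemma Dm_apply {n : ℕ} (i : Fin n) (x : Fin n → ℂ) (k : Fin n) :
    Dm n i x k = if h : (i : ℕ) ≤ (k : ℕ) ∧ (k : ℕ) + 2 ≤ n
    then (((k : ℕ) - (i : ℕ) + 1 : ℕ) : ℂ) *
      x ⟨(k : ℕ) - (i : ℕ), Nat.lt_of_le_of_lt (Nat.sub_le _ _) k.isLt⟩ else 0 := rfl

lemma Dm_E {n : ℕ} (i : Fin n) (p : ℕ) :
    Dm n i (E n p) = if p + (i : ℕ) + 2 ≤ n
      then ((p + 1 : ℕ) : ℂ) • E n (p + (i : ℕ)) else 0 := by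
  funext k
  have hk := k.isLt
  rw [Dm_apply]
  by_cases h1 : (i : ℕ) ≤ (k : ℕ) ∧ (k : ℕ) + 2 ≤ n
  · rw [dif_pos h1]
    by_cases h2 : (k : ℕ) - (i : ℕ) = p
    · subst h2
      rw [if_pos (by omega : (k:ℕ) - (i:ℕ) + (i:ℕ) + 2 ≤ n)]
      show _ * (if ((k:ℕ) - (i:ℕ) : ℕ) = (k:ℕ) - (i:ℕ) then (1:ℂ) else 0)
        = _ * (if (k:ℕ) = (k:ℕ) - (i:ℕ) + (i:ℕ) then (1:ℂ) else 0)
      rw [if_pos rfl, if_pos (by omega : (k:ℕ) = (k:ℕ) - (i:ℕ) + (i:ℕ))]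
    · show _ * (if ((k:ℕ) - (i:ℕ) : ℕ) = p then (1:ℂ) else 0) = _
      rw [if_neg h2, mul_zero]
      by_cases hc : p + (i : ℕ) + 2 ≤ n
      · rw [if_pos hc]
        show (0:ℂ) = _ * (if (k:ℕ) = p + (i:ℕ) then (1:ℂ) else 0)
        rw [if_neg (by omega), mul_zero]
      · rw [if_neg hc]; rfl
  · rw [dif_neg h1]
    by_cases hc : p + (i : ℕ) + 2 ≤ n
    · rw [if_pos hc]
      show (0:ℂ) = _ * (if (k:ℕ) = p + (i:ℕ) then (1:ℂ) else 0)
      rw [if_neg (by omega), mul_zero]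
    · rw [if_neg hc]; rfl

noncomputable def Rm (n : ℕ) (p q : Fin n) : (Fin n → ℂ) →ₗ[ℂ] (Fin n → ℂ) where
  toFun x := x p • (Pi.single q 1 : Fin n → ℂ)
  map_add' x y := by simp [add_smul]
  map_smul' c x := by simp [smul_smul]

lemma Rm_E {n : ℕ} (p q : Fin n) (r : ℕ) :
    Rm n p q (E n r) = if (p : ℕ) = r then (Pi.single q 1 : Fin n → ℂ) else 0 := by
  show (E n r p) • (Pi.single q 1 : Fin n → ℂ) = _
  simp only [E]
  split_ifs <;> simp

lemma mem_derivs_of_singles {n : ℕ} (φ : (Fin n → ℂ) →ₗ[ℂ] (Fin n → ℂ))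
    (h : ∀ p q : Fin n, φ (mu11 n (E n p) (E n q)) =
      mu11 n (φ (E n p)) (E n q) + mu11 n (E n p) (φ (E n q))) :
    φ ∈ derivs (mu11 n) 0 := by
  constructor
  · have key : (mu11 n).compr₂ φ = (mu11 n).comp φ + (mu11 n).compl₂ φ := by
      apply LinearMap.ext_basis (Pi.basisFun ℂ (Fin n)) (Pi.basisFun ℂ (Fin n))
      intro p q
      simp only [Pi.basisFun_apply, ← E_single]
      simpa using h p q
    intro x y
    have h2 := DFunLike.congr_fun (DFunLike.congr_fun key x) y
    simpa using h2
  · intro x y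
    simp

lemma Dm_mem {n : ℕ} (i : Fin n) : Dm n i ∈ derivs (mu11 n) 0 := by
  apply mem_derivs_of_singles
  intro p q
  rw [mu11_E, Dm_E, Dm_E]
  by_cases hc : (p:ℕ) + (q:ℕ) + 3 ≤ n <;>
    by_cases h1 : (p:ℕ) + (i:ℕ) + 2 ≤ n <;>
    by_cases h2 : (q:ℕ) + (i:ℕ) + 2 ≤ n <;>
    simp only [hc, h1, h2, if_true, if_false] <;>
    simp only [Dm_E, map_zero, map_smul, LinearMap.smul_apply, LinearMap.zero_apply,
      smul_zero, mu11_E, add_zero, zero_add] <;>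
    funext k <;>
    simp only [ite_apply, Pi.add_apply, Pi.smul_apply, Pi.zero_apply, smul_eq_mul, E,
      mul_ite, mul_one, mul_zero] <;>
    split_ifs <;>
    first
      | (exfalso; omega)
      | rfl
      | (push_cast; ring)
      | norm_num

lemma Rm_mem {n : ℕ} (p q : Fin n) (hp : (p : ℕ) = 0 ∨ (p : ℕ) + 1 = n)
    (hq : n ≤ (q : ℕ) + 2) : Rm n p q ∈ derivs (mu11 n) 0 := by
  apply mem_derivs_of_singles
  intro r s
  have hq' := q.isLt
  have t1 : mu11 n (Rm n p q (E n (r : ℕ))) (E n (s : ℕ)) = 0 := by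
    rw [Rm_E]
    split_ifs
    · rw [← E_single, mu11_E, if_neg (by omega)]
    · simp
  have t2 : mu11 n (E n (r : ℕ)) (Rm n p q (E n (s : ℕ))) = 0 := by
    rw [Rm_E]
    split_ifs
    · rw [← E_single, mu11_E, if_neg (by omega)]
    · simp
  rw [mu11_E, t1, t2, add_zero]
  by_cases hc : (r : ℕ) + (s : ℕ) + 3 ≤ n
  · rw [if_pos hc, Rm_E, if_neg (by omega)]
  · rw [if_neg hc, map_zero]

lemma mu11_E0 {n : ℕ} (y : Fin n → ℂ) (k : Fin n) :
    mu11 n (E n 0) y k = if h : 1 ≤ (k : ℕ) ∧ (k : ℕ) + 2 ≤ n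
      then y ⟨(k : ℕ) - 1, by omega⟩ else 0 := by
  have hk := k.isLt
  rw [mu11_apply]
  have step : ∀ a b : Fin n,
      (if (a : ℕ) + (b : ℕ) + 1 = (k : ℕ) ∧ (k : ℕ) + 2 ≤ n then (1:ℂ) else 0) *
        (E n 0 a * y b)
      = if (a : ℕ) = 0 then (if (b : ℕ) = (k : ℕ) - 1 then
          (if 1 ≤ (k : ℕ) ∧ (k : ℕ) + 2 ≤ n then y b else 0) else 0) else 0 := by
    intro a b
    simp only [E]
    split_ifs <;> first | (exfalso; omega) | ring
  simp only [step]
  have inner : ∀ a : Fin n,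
      (∑ b : Fin n, if (a : ℕ) = 0 then (if (b : ℕ) = (k : ℕ) - 1 then
          (if 1 ≤ (k : ℕ) ∧ (k : ℕ) + 2 ≤ n then y b else 0) else 0) else 0)
      = if (a : ℕ) = 0 then (if hb : (k : ℕ) - 1 < n then
          (if 1 ≤ (k : ℕ) ∧ (k : ℕ) + 2 ≤ n then y ⟨(k:ℕ)-1, hb⟩ else 0) else 0) else 0 := by
    intro a
    by_cases h : (a : ℕ) = 0
    · simp only [h, if_true]
      exact sum_if_val ((k:ℕ)-1) _
    · simp [h]
  simp only [inner]
  rw [sum_if_val 0 (fun _ => _)]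
  rw [dif_pos (by omega : 0 < n), dif_pos (by omega : (k:ℕ) - 1 < n)]
  split_ifs <;> rfl

lemma derivs_eq_zero {n : ℕ} (hn : 3 < n) (φ : (Fin n → ℂ) →ₗ[ℂ] (Fin n → ℂ))
    (hφ : φ ∈ derivs (mu11 n) 0) (h0 : φ (E n 0) = 0)
    (ha : φ (E n (n-1)) ⟨n-2, by omega⟩ = 0)
    (hb : φ (E n (n-1)) ⟨n-1, by omega⟩ = 0) : φ = 0 := by
  have hstep : ∀ j : ℕ, j + 2 ≤ n → φ (E n j) = 0 := by
    intro j
    induction j with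
    | zero => intro _; exact h0
    | succ j ih =>
      intro hj
      have hE : E n (j+1) = mu11 n (E n 0) (E n j) := by
        rw [mu11_E, if_pos (by omega : 0 + j + 3 ≤ n), zero_add]
      rw [hE, hφ.1, ih (by omega), h0, map_zero, map_zero, LinearMap.zero_apply,
        add_zero]
  have hv : mu11 n (E n 0) (φ (E n (n-1))) = 0 := by
    have h1 : mu11 n (E n 0) (E n (n-1)) = 0 := by
      rw [mu11_E, if_neg (by omega)]
    have h2 := hφ.1 (E n 0) (E n (n-1))
    rw [h1, h0, map_zero, map_zero, LinearMap.zero_apply, zero_add] at h2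
    exact h2.symm
  have hcoord : ∀ j : Fin n, φ (E n (n-1)) j = 0 := by
    intro j
    have hj := j.isLt
    by_cases hsmall : (j : ℕ) + 3 ≤ n
    · have := congrFun hv ⟨(j:ℕ) + 1, by omega⟩
      rw [mu11_E0] at this
      rw [dif_pos (by constructor <;> simp <;> omega)] at this
      simpa using this
    · by_cases h2 : (j : ℕ) + 2 = n
      · have : j = (⟨n-2, by omega⟩ : Fin n) := by apply Fin.ext; simp; omega
        rw [this]; exact ha
      · have : j = (⟨n-1, by omega⟩ : Fin n) := by apply Fin.ext; simp; omega
        rw [this]; exact hb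
  apply Module.Basis.ext (Pi.basisFun ℂ (Fin n))
  intro i
  rw [Pi.basisFun_apply, ← E_single, LinearMap.zero_apply]
  by_cases hi : (i : ℕ) + 2 ≤ n
  · exact hstep _ hi
  · have : (i : ℕ) = n - 1 := by have := i.isLt; omega
    rw [this]
    funext j
    exact hcoord j

noncomputable def Lmap (n : ℕ) (hn : 3 < n) :
    ↥(derivs (mu11 n) 0) →ₗ[ℂ] (Fin n → ℂ) × ℂ × ℂ where
  toFun φ := (φ.1 (E n 0), φ.1 (E n (n-1)) ⟨n-2, by omega⟩, φ.1 (E n (n-1)) ⟨n-1, by omega⟩)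
  map_add' φ ψ := by
    simp [Prod.ext_iff]
  map_smul' c φ := by
    simp [Prod.ext_iff]

lemma single_smul_one {n : ℕ} (i : Fin n) (c : ℂ) :
    c • (Pi.single i 1 : Fin n → ℂ) = Pi.single i c := by
  funext k
  simp only [Pi.smul_apply, Pi.single_apply, smul_eq_mul]
  split_ifs <;> simp

theorem stmt11' (n : ℕ) (hn : 3 < n) :
    Module.finrank ℂ ↥(derivs (mu11 n) 0) = n + 2 := by
  have hinj : Function.Injective (Lmap n hn) := by
    rw [injective_iff_map_eq_zero]
    intro φ h
    rw [Prod.ext_iff, Prod.ext_iff] at h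
    obtain ⟨h1, h2, h3⟩ := h
    exact Subtype.ext (derivs_eq_zero hn φ.1 φ.2 h1 h2 h3)
  have hsurj : Function.Surjective (Lmap n hn) := by
    rintro ⟨v, s, t⟩
    set G : Fin n → ↥(derivs (mu11 n) 0) := fun i =>
      if h : (i : ℕ) + 2 ≤ n then ⟨Dm n i, Dm_mem i⟩
      else ⟨Rm n ⟨0, by omega⟩ ⟨n-1, by omega⟩,
        Rm_mem _ _ (Or.inl rfl) (by simp; omega)⟩ with hG
    set R1 : ↥(derivs (mu11 n) 0) :=
      ⟨Rm n ⟨n-1, by omega⟩ ⟨n-2, by omega⟩,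
        Rm_mem _ _ (Or.inr (by simp; omega)) (by simp; omega)⟩ with hR1
    set R2 : ↥(derivs (mu11 n) 0) :=
      ⟨Rm n ⟨n-1, by omega⟩ ⟨n-1, by omega⟩,
        Rm_mem _ _ (Or.inr (by simp; omega)) (by simp; omega)⟩ with hR2
    refine ⟨(∑ i, v i • G i) + s • R1 + t • R2, ?_⟩
    have hG0 : ∀ i : Fin n, (G i).1 (E n 0) = Pi.single i 1 := by
      intro i
      rw [hG]
      by_cases h : (i : ℕ) + 2 ≤ n
      · simp only [dif_pos h]
        rw [Dm_E, if_pos (by omega : 0 + (i:ℕ) + 2 ≤ n)]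
        simp only [Nat.zero_add, Nat.cast_one, one_smul]
        rw [E_single]
      · simp only [dif_neg h]
        rw [Rm_E, if_pos rfl]
        have hii := i.isLt
        have hi : i = (⟨n-1, by omega⟩ : Fin n) := by
          apply Fin.ext
          show (i : ℕ) = n - 1
          omega
        exact congrArg (fun j : Fin n => (Pi.single j 1 : Fin n → ℂ)) hi.symm
    have hGn : ∀ i : Fin n, (G i).1 (E n (n-1)) = 0 := by
      intro i
      rw [hG]
      by_cases h : (i : ℕ) + 2 ≤ n
      · simp only [dif_pos h]
        rw [Dm_E, if_neg (by omega)]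
      · simp only [dif_neg h]
        rw [Rm_E, if_neg (by simp; omega)]
    have hR1n : R1.1 (E n (n-1)) = Pi.single (⟨n-2, by omega⟩ : Fin n) 1 := by
      rw [hR1, Rm_E, if_pos (by simp)]
    have hR2n : R2.1 (E n (n-1)) = Pi.single (⟨n-1, by omega⟩ : Fin n) 1 := by
      rw [hR2, Rm_E, if_pos (by simp)]
    have hR10 : R1.1 (E n 0) = 0 := by
      rw [hR1, Rm_E, if_neg (by simp; omega)]
    have hR20 : R2.1 (E n 0) = 0 := by
      rw [hR2, Rm_E, if_neg (by simp; omega)]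
    have hcoe : ((∑ i, v i • G i) + s • R1 + t • R2).1
        = (∑ i, v i • (G i).1) + s • R1.1 + t • R2.1 := by
      push_cast
      rfl
    rw [Prod.ext_iff, Prod.ext_iff]
    refine ⟨?_, ?_, ?_⟩
    · show ((∑ i, v i • G i) + s • R1 + t • R2).1 (E n 0) = v
      rw [hcoe]
      simp only [LinearMap.add_apply, LinearMap.sum_apply, LinearMap.smul_apply]
      rw [hR10, hR20]
      simp only [smul_zero, add_zero]
      rw [Finset.sum_congr rfl (fun i _ => by rw [hG0 i, single_smul_one])]
      rw [Finset.univ_sum_single]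
    · show ((∑ i, v i • G i) + s • R1 + t • R2).1 (E n (n-1)) ⟨n-2, _⟩ = s
      rw [hcoe]
      simp only [LinearMap.add_apply, LinearMap.sum_apply, LinearMap.smul_apply]
      rw [hR1n, hR2n]
      rw [Finset.sum_congr rfl (fun i _ => by rw [hGn i, smul_zero])]
      simp only [Finset.sum_const_zero, Pi.add_apply, Pi.smul_apply, Pi.zero_apply, zero_add]
      rw [Pi.single_apply, Pi.single_apply]
      rw [if_pos rfl, if_neg (by simp [Fin.ext_iff]; omega)]
      simp
    · show ((∑ i, v i • G i) + s • R1 + t • R2).1 (E n (n-1)) ⟨n-1, _⟩ = t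
      rw [hcoe]
      simp only [LinearMap.add_apply, LinearMap.sum_apply, LinearMap.smul_apply]
      rw [hR1n, hR2n]
      rw [Finset.sum_congr rfl (fun i _ => by rw [hGn i, smul_zero])]
      simp only [Finset.sum_const_zero, Pi.add_apply, Pi.smul_apply, Pi.zero_apply, zero_add]
      rw [Pi.single_apply, Pi.single_apply]
      rw [if_neg (by simp [Fin.ext_iff]; omega), if_pos rfl]
      simp
  have e := LinearEquiv.ofBijective (Lmap n hn) ⟨hinj, hsurj⟩
  rw [e.finrank_eq]
  rw [Module.finrank_prod, Module.finrank_prod, Module.finrank_self]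
  simp [Module.finrank_fintype_fun_eq_card]

/-- For n > 3, the Lie algebra of derivations of the Poisson algebra `P₁,₁ⁿ`
(zero bracket) has dimension `n + 2`. -/
theorem stmt11 (n : ℕ) (hn : 3 < n) :
    Module.finrank ℂ ↥(derivs (mu11 n) 0) = n + 2 :=
  stmt11' n hn
end

section
/- Let n > 3. The Lie algebra of derivations of the Poisson algebra P₁,₂ⁿ has dimension n. -/
open scoped BigOperators

/-- The bracket of `P₁,₂ⁿ`: `{e₁,eₙ} = eₙ`. -/
noncomputable def brA (n : ℕ) : (Fin n → ℂ) →ₗ[ℂ] (Fin n → ℂ) →ₗ[ℂ] (Fin n → ℂ) :=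
  sb (fun a b k =>
    if (a : ℕ) = 0 ∧ (b : ℕ) + 1 = n ∧ (k : ℕ) + 1 = n then 1
    else if (a : ℕ) + 1 = n ∧ (b : ℕ) = 0 ∧ (k : ℕ) + 1 = n then -1 else 0)

lemma sb_apply {n : ℕ} (c : Fin n → Fin n → Fin n → ℂ) (x y : Fin n → ℂ) (k : Fin n) :
    sb c x y k = ∑ a, ∑ b, c a b k * (x a * y b) := rfl

lemma sum_ite_nat {n : ℕ} (m : ℕ) (g : Fin n → ℂ) :
    ∑ i : Fin n, (if m = (i : ℕ) then g i else 0) = if h : m < n then g ⟨m, h⟩ else 0 := by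
  split
  · rename_i h
    rw [Finset.sum_eq_single (⟨m, h⟩ : Fin n)]
    · simp
    · intro b _ hb
      rw [if_neg]
      intro he
      exact hb (by simp [Fin.ext_iff, ← he])
    · simp
  · rename_i h
    apply Finset.sum_eq_zero
    intro i _
    rw [if_neg]
    intro he
    exact h (he ▸ i.isLt)

lemma sb_single_right {n : ℕ} (c : Fin n → Fin n → Fin n → ℂ) (x : Fin n → ℂ) (b k : Fin n) :
    sb c x (Pi.single b 1) k = ∑ a, c a b k * x a := by
  rw [sb_apply]
  refine Finset.sum_congr rfl fun a _ => ?_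
  rw [Finset.sum_eq_single b] <;> simp (config := { contextual := true }) [Pi.single_apply]

lemma sb_single_left {n : ℕ} (c : Fin n → Fin n → Fin n → ℂ) (y : Fin n → ℂ) (a k : Fin n) :
    sb c (Pi.single a 1) y k = ∑ b, c a b k * y b := by
  rw [sb_apply, Finset.sum_eq_single a] <;>
    simp (config := { contextual := true }) [Pi.single_apply]

/-- Bilinear extension: a Leibniz-type identity holds for all vectors iff it
holds on basis vectors. -/
lemma mem_derivs_iff {n : ℕ}
    (m b : (Fin n → ℂ) →ₗ[ℂ] (Fin n → ℂ) →ₗ[ℂ] (Fin n → ℂ))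
    (φ : (Fin n → ℂ) →ₗ[ℂ] (Fin n → ℂ)) :
    φ ∈ derivs m b ↔
      ((∀ i j : Fin n, φ (m (Pi.single i 1) (Pi.single j 1)) =
          m (φ (Pi.single i 1)) (Pi.single j 1) + m (Pi.single i 1) (φ (Pi.single j 1))) ∧
       (∀ i j : Fin n, φ (b (Pi.single i 1) (Pi.single j 1)) =
          b (φ (Pi.single i 1)) (Pi.single j 1) + b (Pi.single i 1) (φ (Pi.single j 1)))) := by
  constructor
  · rintro ⟨h1, h2⟩
    exact ⟨fun i j => h1 _ _, fun i j => h2 _ _⟩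
  · rintro ⟨h1, h2⟩
    have key : ∀ (mm : (Fin n → ℂ) →ₗ[ℂ] (Fin n → ℂ) →ₗ[ℂ] (Fin n → ℂ)),
        (∀ i j : Fin n, φ (mm (Pi.single i 1) (Pi.single j 1)) =
          mm (φ (Pi.single i 1)) (Pi.single j 1) + mm (Pi.single i 1) (φ (Pi.single j 1))) →
        ∀ x y, φ (mm x y) = mm (φ x) y + mm x (φ y) := by
      intro mm h x y
      have : mm.compr₂ φ = mm.comp φ + mm.compl₂ φ := by
        apply Module.Basis.ext (Pi.basisFun ℂ (Fin n))
        intro i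
        apply Module.Basis.ext (Pi.basisFun ℂ (Fin n))
        intro j
        simpa [LinearMap.compr₂_apply, LinearMap.compl₂_apply, Pi.basisFun_apply] using h i j
      have := LinearMap.congr_fun (LinearMap.congr_fun this x) y
      simpa [LinearMap.compr₂_apply, LinearMap.compl₂_apply] using this
    exact ⟨key m h1, key b h2⟩

/-- Closed form for the matrix of a general derivation, with natural-number
indices: column `i`, row `k`; parameters `q : ℕ → ℂ`. -/
noncomputable def D (n : ℕ) (q : ℕ → ℂ) (i k : ℕ) : ℂ :=
  if i = 0 then (if 1 ≤ k then q k else 0)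
  else if i + 1 = n then (if k + 1 = n then q 0 else 0)
  else if i < k ∧ k + 2 ≤ n then ((i : ℂ) + 1) * q (k - i) else 0

lemma D_congr {n : ℕ} {q q' : ℕ → ℂ} (h : ∀ m, m < n → q m = q' m) {i k : ℕ}
    (_ : i < n) (hk : k < n) : D n q i k = D n q' i k := by
  unfold D
  split_ifs with h1 h2 h3 h4 <;> first
    | rfl
    | (apply h; omega)
    | (rw [h (k - i) (by omega)])

lemma mu_single_single {n : ℕ} (a b : Fin n) :
    mu11 n (Pi.single a 1) (Pi.single b 1) =
      if h : (a : ℕ) + (b : ℕ) + 3 ≤ n then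
        (Pi.single (⟨(a : ℕ) + (b : ℕ) + 1, by omega⟩ : Fin n) (1 : ℂ) : Fin n → ℂ)
      else 0 := by
  funext k
  rw [mu11, sb_single_left, Finset.sum_eq_single b]
  · simp only [Pi.single_eq_same, mul_one]
    split_ifs <;> simp only [Pi.single_apply, Pi.zero_apply, Fin.ext_iff, Fin.val_mk] <;>
      first
        | rfl | (exfalso; omega)
        | (split_ifs <;> first | rfl | (exfalso; omega))
  · intro c _ hc
    simp [Pi.single_apply, hc]
  · simp

lemma br_single_single {n : ℕ} (hn : 1 < n) (a b : Fin n) :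
    brA n (Pi.single a 1) (Pi.single b 1) =
      (((if (a : ℕ) = 0 ∧ (b : ℕ) + 1 = n then 1 else 0)
        - (if (a : ℕ) + 1 = n ∧ (b : ℕ) = 0 then 1 else 0) : ℂ) •
        (Pi.single (⟨n - 1, by omega⟩ : Fin n) (1 : ℂ) : Fin n → ℂ)) := by
  funext k
  rw [brA, sb_single_left, Finset.sum_eq_single b]
  · simp only [Pi.single_eq_same, mul_one, Pi.smul_apply, smul_eq_mul, Pi.single_apply,
      Fin.ext_iff, Fin.val_mk]
    split_ifs <;> first | (exfalso; omega) | ring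
  · intro c _ hc
    simp [Pi.single_apply, hc]
  · simp

lemma mu_single_right {n : ℕ} (x : Fin n → ℂ) (b k : Fin n) :
    mu11 n x (Pi.single b 1) k =
      if h : (b : ℕ) + 1 ≤ (k : ℕ) ∧ (k : ℕ) + 2 ≤ n then
        x ⟨(k : ℕ) - (b : ℕ) - 1, by have := k.isLt; omega⟩ else 0 := by
  rw [mu11, sb_single_right]
  rw [show (∑ a : Fin n, (if (a : ℕ) + (b : ℕ) + 1 = (k : ℕ) ∧ (k : ℕ) + 2 ≤ n then (1:ℂ) else 0) * x a)
      = ∑ a : Fin n, (if (k : ℕ) - (b : ℕ) - 1 = (a : ℕ) then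
          (if (b : ℕ) + 1 ≤ (k : ℕ) ∧ (k : ℕ) + 2 ≤ n then x a else 0) else 0) from
    Finset.sum_congr rfl fun a _ => by split_ifs <;> first | (exfalso; omega) | ring]
  rw [sum_ite_nat]
  split_ifs with h1 h2 h3 <;> first | rfl | (exfalso; have := k.isLt; omega)

lemma mu_single_left {n : ℕ} (x : Fin n → ℂ) (a k : Fin n) :
    mu11 n (Pi.single a 1) x k =
      if h : (a : ℕ) + 1 ≤ (k : ℕ) ∧ (k : ℕ) + 2 ≤ n then
        x ⟨(k : ℕ) - (a : ℕ) - 1, by have := k.isLt; omega⟩ else 0 := by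
  rw [mu11, sb_single_left]
  rw [show (∑ b : Fin n, (if (a : ℕ) + (b : ℕ) + 1 = (k : ℕ) ∧ (k : ℕ) + 2 ≤ n then (1:ℂ) else 0) * x b)
      = ∑ b : Fin n, (if (k : ℕ) - (a : ℕ) - 1 = (b : ℕ) then
          (if (a : ℕ) + 1 ≤ (k : ℕ) ∧ (k : ℕ) + 2 ≤ n then x b else 0) else 0) from
    Finset.sum_congr rfl fun b _ => by split_ifs <;> first | (exfalso; omega) | ring]
  rw [sum_ite_nat]
  split_ifs with h1 h2 h3 <;> first | rfl | (exfalso; have := k.isLt; omega)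

lemma br_single_right {n : ℕ} (hn : 1 < n) (x : Fin n → ℂ) (b k : Fin n) :
    brA n x (Pi.single b 1) k =
      (if (b : ℕ) + 1 = n ∧ (k : ℕ) + 1 = n then x ⟨0, by omega⟩ else 0)
      - (if (b : ℕ) = 0 ∧ (k : ℕ) + 1 = n then x ⟨n - 1, by omega⟩ else 0) := by
  rw [brA, sb_single_right]
  rw [show (∑ a : Fin n, (if (a : ℕ) = 0 ∧ (b : ℕ) + 1 = n ∧ (k : ℕ) + 1 = n then (1:ℂ)
        else if (a : ℕ) + 1 = n ∧ (b : ℕ) = 0 ∧ (k : ℕ) + 1 = n then -1 else 0) * x a)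
      = ∑ a : Fin n, ((if (0 : ℕ) = (a : ℕ) then
            (if (b : ℕ) + 1 = n ∧ (k : ℕ) + 1 = n then x a else 0) else 0)
          - (if n - 1 = (a : ℕ) then
            (if (b : ℕ) = 0 ∧ (k : ℕ) + 1 = n then x a else 0) else 0)) from
    Finset.sum_congr rfl fun a _ => by
      have := a.isLt; split_ifs <;> first | (exfalso; omega) | ring]
  rw [Finset.sum_sub_distrib, sum_ite_nat, sum_ite_nat]
  rw [dif_pos (by omega : 0 < n), dif_pos (by omega : n - 1 < n)]

lemma br_single_left {n : ℕ} (hn : 1 < n) (x : Fin n → ℂ) (a k : Fin n) :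
    brA n (Pi.single a 1) x k =
      (if (a : ℕ) = 0 ∧ (k : ℕ) + 1 = n then x ⟨n - 1, by omega⟩ else 0)
      - (if (a : ℕ) + 1 = n ∧ (k : ℕ) + 1 = n then x ⟨0, by omega⟩ else 0) := by
  rw [brA, sb_single_left]
  rw [show (∑ b : Fin n, (if (a : ℕ) = 0 ∧ (b : ℕ) + 1 = n ∧ (k : ℕ) + 1 = n then (1:ℂ)
        else if (a : ℕ) + 1 = n ∧ (b : ℕ) = 0 ∧ (k : ℕ) + 1 = n then -1 else 0) * x b)
      = ∑ b : Fin n, ((if n - 1 = (b : ℕ) then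
            (if (a : ℕ) = 0 ∧ (k : ℕ) + 1 = n then x b else 0) else 0)
          - (if (0 : ℕ) = (b : ℕ) then
            (if (a : ℕ) + 1 = n ∧ (k : ℕ) + 1 = n then x b else 0) else 0)) from
    Finset.sum_congr rfl fun b _ => by
      have := b.isLt; split_ifs <;> first | (exfalso; omega) | ring]
  rw [Finset.sum_sub_distrib, sum_ite_nat, sum_ite_nat]
  rw [dif_pos (by omega : n - 1 < n), dif_pos (by omega : 0 < n)]

/-- Structure constants of the parametrization of derivations. -/
noncomputable def CC (n : ℕ) : Fin n → Fin n → Fin n → ℂ := fun j i k =>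
  if (i : ℕ) = 0 then (if (j : ℕ) = (k : ℕ) ∧ 1 ≤ (k : ℕ) then 1 else 0)
  else if (i : ℕ) + 1 = n then (if (j : ℕ) = 0 ∧ (k : ℕ) + 1 = n then 1 else 0)
  else if (j : ℕ) + (i : ℕ) = (k : ℕ) ∧ (i : ℕ) < (k : ℕ) ∧ (k : ℕ) + 2 ≤ n then
    ((i : ℕ) : ℂ) + 1 else 0

/-- The parametrization of derivations, as a linear map. -/
noncomputable def Phi (n : ℕ) :
    (Fin n → ℂ) →ₗ[ℂ] ((Fin n → ℂ) →ₗ[ℂ] (Fin n → ℂ)) := sb (CC n)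

/-- Extension of a parameter vector to `ℕ`. -/
noncomputable def pp {n : ℕ} (p : Fin n → ℂ) : ℕ → ℂ :=
  fun m => if h : m < n then p ⟨m, h⟩ else 0

lemma Phi_single {n : ℕ} (p : Fin n → ℂ) (i : Fin n) :
    Phi n p (Pi.single i 1) = fun k : Fin n => D n (pp p) (i : ℕ) (k : ℕ) := by
  funext k
  rw [Phi, sb_single_right]
  by_cases h0 : (i : ℕ) = 0
  · rw [show (∑ j : Fin n, CC n j i k * p j)
        = ∑ j : Fin n, (if (k : ℕ) = (j : ℕ) then (if 1 ≤ (k : ℕ) then p j else 0) else 0) from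
      Finset.sum_congr rfl fun j _ => by
        unfold CC; split_ifs <;> first | (exfalso; omega) | ring]
    rw [sum_ite_nat, dif_pos k.isLt]
    unfold D pp
    rw [if_pos h0]
    split_ifs <;> first | rfl | (exfalso; omega)
  · by_cases h1 : (i : ℕ) + 1 = n
    · rw [show (∑ j : Fin n, CC n j i k * p j)
          = ∑ j : Fin n, (if (0 : ℕ) = (j : ℕ) then
              (if (k : ℕ) + 1 = n then p j else 0) else 0) from
        Finset.sum_congr rfl fun j _ => by
          unfold CC; split_ifs <;> first | (exfalso; omega) | ring]
      rw [sum_ite_nat, dif_pos (by have := k.isLt; omega : 0 < n)]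
      unfold D pp
      rw [if_neg h0, if_pos h1]
      split_ifs <;> first | rfl | (exfalso; omega)
    · rw [show (∑ j : Fin n, CC n j i k * p j)
          = ∑ j : Fin n, (if (k : ℕ) - (i : ℕ) = (j : ℕ) then
              (if (i : ℕ) < (k : ℕ) ∧ (k : ℕ) + 2 ≤ n then (((i : ℕ) : ℂ) + 1) * p j else 0)
            else 0) from
        Finset.sum_congr rfl fun j _ => by
          unfold CC; split_ifs <;> first | (exfalso; omega) | ring]
      rw [sum_ite_nat, dif_pos (by have := k.isLt; omega : (k : ℕ) - (i : ℕ) < n)]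
      unfold D pp
      rw [if_neg h0, if_neg h1]
      split_ifs <;> first | rfl | (exfalso; omega)

lemma D_zero {n : ℕ} (q : ℕ → ℂ) (k : ℕ) : D n q 0 k = if 1 ≤ k then q k else 0 := by
  unfold D; rw [if_pos rfl]

lemma D_mid {n : ℕ} (q : ℕ → ℂ) {i : ℕ} (k : ℕ) (h0 : i ≠ 0) (h1 : i + 1 ≠ n) :
    D n q i k = if i < k ∧ k + 2 ≤ n then ((i : ℂ) + 1) * q (k - i) else 0 := by
  unfold D; rw [if_neg h0, if_neg h1]

lemma D_top {n : ℕ} (q : ℕ → ℂ) {i : ℕ} (k : ℕ) (h0 : i ≠ 0) (h1 : i + 1 = n) :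
    D n q i k = if k + 1 = n then q 0 else 0 := by
  unfold D; rw [if_neg h0, if_pos h1]

lemma D_row0 {n : ℕ} (q : ℕ → ℂ) {a : ℕ} (hn : 2 ≤ n) : D n q a 0 = 0 := by
  unfold D; split_ifs <;> first | rfl | (exfalso; omega)

lemma D_rowlast {n : ℕ} (q : ℕ → ℂ) {a : ℕ} (hn : 2 ≤ n) :
    D n q a (n - 1) = if a = 0 then q (n - 1) else if a + 1 = n then q 0 else 0 := by
  unfold D; split_ifs <;> first | rfl | (exfalso; omega)

lemma key_mul {n : ℕ} (hn : 3 < n) (q : ℕ → ℂ) (a b k : ℕ) (ha : a < n) (hb : b < n)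
    (hk : k < n) :
    (if a + b + 3 ≤ n then D n q (a + b + 1) k else 0)
      = (if b + 1 ≤ k ∧ k + 2 ≤ n then D n q a (k - b - 1) else 0)
        + (if a + 1 ≤ k ∧ k + 2 ≤ n then D n q b (k - a - 1) else 0) := by
  by_cases hk2 : k + 2 ≤ n
  · by_cases hab : a + b + 3 ≤ n
    · rw [if_pos hab, D_mid q k (by omega) (by omega)]
      by_cases ha0 : a = 0 <;> by_cases hb0 : b = 0
      · rw [ha0, hb0, D_zero]
        split_ifs <;> first
          | rfl | (exfalso; omega)
          | ((try rw [show k - 0 - 1 = k - (0 + 0 + 1) from by omega]);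
             push_cast; ring)
      · rw [ha0, D_zero, D_mid q (k - 0 - 1) hb0 (by omega)]
        split_ifs <;> first
          | rfl | (exfalso; omega)
          | ((try rw [show k - 0 - 1 - b = k - (0 + b + 1) from by omega]);
             (try rw [show k - b - 1 = k - (0 + b + 1) from by omega]);
             push_cast; ring)
      · rw [hb0, D_zero, D_mid q (k - 0 - 1) ha0 (by omega)]
        split_ifs <;> first
          | rfl | (exfalso; omega)
          | ((try rw [show k - 0 - 1 - a = k - (a + 0 + 1) from by omega]);
             (try rw [show k - a - 1 = k - (a + 0 + 1) from by omega]);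
             push_cast; ring)
      · rw [D_mid q (k - b - 1) ha0 (by omega), D_mid q (k - a - 1) hb0 (by omega)]
        split_ifs <;> first
          | rfl | (exfalso; omega)
          | ((try rw [show k - b - 1 - a = k - (a + b + 1) from by omega]);
             (try rw [show k - a - 1 - b = k - (a + b + 1) from by omega]);
             push_cast; ring)
    · rw [if_neg hab]
      have t1 : (if b + 1 ≤ k ∧ k + 2 ≤ n then D n q a (k - b - 1) else 0) = 0 := by
        split_ifs with h
        · unfold D; split_ifs <;> first | rfl | (exfalso; omega)
        · rfl
      have t2 : (if a + 1 ≤ k ∧ k + 2 ≤ n then D n q b (k - a - 1) else 0) = 0 := by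
        split_ifs with h
        · unfold D; split_ifs <;> first | rfl | (exfalso; omega)
        · rfl
      rw [t1, t2, add_zero]
  · rw [if_neg (show ¬(b + 1 ≤ k ∧ k + 2 ≤ n) from fun h => hk2 h.2),
      if_neg (show ¬(a + 1 ≤ k ∧ k + 2 ≤ n) from fun h => hk2 h.2), add_zero]
    split_ifs with h
    · rw [D_mid q k (by omega) (by omega), if_neg (by omega)]
    · rfl

lemma key_br {n : ℕ} (hn : 3 < n) (q : ℕ → ℂ) (a b k : ℕ) (ha : a < n) (hb : b < n)
    (hk : k < n) :
    ((if a = 0 ∧ b + 1 = n then 1 else 0) - (if a + 1 = n ∧ b = 0 then 1 else 0) : ℂ)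
        * D n q (n - 1) k
      = ((if b + 1 = n ∧ k + 1 = n then D n q a 0 else 0)
          - (if b = 0 ∧ k + 1 = n then D n q a (n - 1) else 0))
        + ((if a = 0 ∧ k + 1 = n then D n q b (n - 1) else 0)
          - (if a + 1 = n ∧ k + 1 = n then D n q b 0 else 0)) := by
  rw [D_top q k (by omega) (by omega), D_row0 q (by omega), D_row0 q (by omega),
    D_rowlast q (by omega), D_rowlast q (by omega)]
  simp only [ite_self]
  by_cases hk1 : k + 1 = n
  · rw [if_pos hk1, if_congr (and_iff_left hk1) rfl rfl, if_congr (and_iff_left hk1) rfl rfl]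
    by_cases ha0 : a = 0 <;> by_cases hb0 : b = 0 <;>
      split_ifs <;> first | (exfalso; omega) | ring
  · rw [if_neg hk1, if_neg (show ¬(b = 0 ∧ k + 1 = n) from fun h => hk1 h.2),
      if_neg (show ¬(a = 0 ∧ k + 1 = n) from fun h => hk1 h.2)]
    ring

lemma Phi_mem {n : ℕ} (hn : 3 < n) (p : Fin n → ℂ) : Phi n p ∈ derivs (mu11 n) (brA n) := by
  rw [mem_derivs_iff]
  constructor
  · intro i j
    funext k
    rw [Pi.add_apply]
    have hL : Phi n p (mu11 n (Pi.single i 1) (Pi.single j 1)) k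
        = (if (i : ℕ) + (j : ℕ) + 3 ≤ n then D n (pp p) ((i : ℕ) + (j : ℕ) + 1) (k : ℕ)
            else 0) := by
      rw [mu_single_single]
      split_ifs with h
      · rw [Phi_single]
      · rw [map_zero]
        rfl
    have hR1 : mu11 n (Phi n p (Pi.single i 1)) (Pi.single j 1) k
        = (if (j : ℕ) + 1 ≤ (k : ℕ) ∧ (k : ℕ) + 2 ≤ n then
            D n (pp p) (i : ℕ) ((k : ℕ) - (j : ℕ) - 1) else 0) := by
      rw [Phi_single, mu_single_right]
      split_ifs <;> rfl
    have hR2 : mu11 n (Pi.single i 1) (Phi n p (Pi.single j 1)) k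
        = (if (i : ℕ) + 1 ≤ (k : ℕ) ∧ (k : ℕ) + 2 ≤ n then
            D n (pp p) (j : ℕ) ((k : ℕ) - (i : ℕ) - 1) else 0) := by
      rw [Phi_single, mu_single_left]
      split_ifs <;> rfl
    rw [hL, hR1, hR2]
    exact key_mul hn (pp p) _ _ _ i.isLt j.isLt k.isLt
  · intro i j
    funext k
    rw [Pi.add_apply]
    have hL : Phi n p (brA n (Pi.single i 1) (Pi.single j 1)) k
        = ((if (i : ℕ) = 0 ∧ (j : ℕ) + 1 = n then 1 else 0)
            - (if (i : ℕ) + 1 = n ∧ (j : ℕ) = 0 then 1 else 0) : ℂ)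
            * D n (pp p) (n - 1) (k : ℕ) := by
      rw [br_single_single (by omega), map_smul, Pi.smul_apply, Phi_single, smul_eq_mul]
    have hR1 : brA n (Phi n p (Pi.single i 1)) (Pi.single j 1) k
        = ((if (j : ℕ) + 1 = n ∧ (k : ℕ) + 1 = n then D n (pp p) (i : ℕ) 0 else 0)
            - (if (j : ℕ) = 0 ∧ (k : ℕ) + 1 = n then D n (pp p) (i : ℕ) (n - 1) else 0)) := by
      rw [Phi_single, br_single_right (by omega)]
    have hR2 : brA n (Pi.single i 1) (Phi n p (Pi.single j 1)) k
        = ((if (i : ℕ) = 0 ∧ (k : ℕ) + 1 = n then D n (pp p) (j : ℕ) (n - 1) else 0)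
            - (if (i : ℕ) + 1 = n ∧ (k : ℕ) + 1 = n then D n (pp p) (j : ℕ) 0 else 0)) := by
      rw [Phi_single, br_single_left (by omega)]
    rw [hL, hR1, hR2]
    exact key_br hn (pp p) _ _ _ i.isLt j.isLt k.isLt

lemma recon {n : ℕ} (hn : 3 < n) (d : ℕ → ℕ → ℂ)
    (hmul : ∀ a b k, a < n → b < n → k < n →
      (if a + b + 3 ≤ n then d (a + b + 1) k else 0)
        = (if b + 1 ≤ k ∧ k + 2 ≤ n then d a (k - b - 1) else 0)
          + (if a + 1 ≤ k ∧ k + 2 ≤ n then d b (k - a - 1) else 0))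
    (hbr : ∀ a b k, a < n → b < n → k < n →
      ((if a = 0 ∧ b + 1 = n then 1 else 0) - (if a + 1 = n ∧ b = 0 then 1 else 0) : ℂ)
          * d (n - 1) k
        = ((if b + 1 = n ∧ k + 1 = n then d a 0 else 0)
            - (if b = 0 ∧ k + 1 = n then d a (n - 1) else 0))
          + ((if a = 0 ∧ k + 1 = n then d b (n - 1) else 0)
            - (if a + 1 = n ∧ k + 1 = n then d b 0 else 0))) :
    ∀ i k, i < n → k < n →
      d i k = D n (fun m => if m = 0 then d (n - 1) (n - 1) else d 0 m) i k := by
  set q : ℕ → ℂ := fun m => if m = 0 then d (n - 1) (n - 1) else d 0 m with hq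
  have h00 : d 0 0 = 0 := by
    have h := hbr 0 (n - 1) (n - 1) (by omega) (by omega) (by omega)
    rw [if_pos ⟨rfl, by omega⟩, if_neg (by omega : ¬(0 + 1 = n ∧ n - 1 = 0)),
      if_pos ⟨by omega, by omega⟩, if_neg (by omega : ¬(n - 1 = 0 ∧ n - 1 + 1 = n)),
      if_pos ⟨rfl, by omega⟩, if_neg (by omega : ¬(0 + 1 = n ∧ n - 1 + 1 = n))] at h
    linear_combination -h
  have hcol : ∀ k, k < n → d (n - 1) k = if k + 1 = n then d (n - 1) (n - 1) else 0 := by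
    intro k hk
    have h := hbr 0 (n - 1) k (by omega) (by omega) hk
    rw [if_pos ⟨rfl, by omega⟩, if_neg (by omega : ¬(0 + 1 = n ∧ n - 1 = 0)),
      if_congr (and_iff_right (by omega : n - 1 + 1 = n)) rfl rfl,
      if_neg (by omega : ¬(n - 1 = 0 ∧ k + 1 = n)),
      if_congr (and_iff_right rfl) rfl rfl,
      if_neg (by omega : ¬(0 + 1 = n ∧ k + 1 = n))] at h
    by_cases hk1 : k + 1 = n
    · simp only [if_pos hk1] at h ⊢
      linear_combination h + h00
    · simp only [if_neg hk1] at h ⊢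
      linear_combination h
  have hmid : ∀ b, b + 3 ≤ n → ∀ k, k < n →
      d (b + 1) k = if b + 1 < k ∧ k + 2 ≤ n then ((b : ℂ) + 2) * d 0 (k - (b + 1)) else 0 := by
    intro b
    induction b with
    | zero =>
      intro h3 k hk
      have h := hmul 0 0 k (by omega) (by omega) hk
      rw [if_pos (by omega : 0 + 0 + 3 ≤ n)] at h
      by_cases hg : 0 + 1 < k ∧ k + 2 ≤ n
      · rw [if_pos hg]
        rw [if_pos (by omega : 0 + 1 ≤ k ∧ k + 2 ≤ n),
          show k - 0 - 1 = k - (0 + 1) from by omega] at h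
        rw [show (0 + 0 + 1) = 0 + 1 from by omega] at h
        push_cast
        linear_combination h
      · rw [if_neg hg]
        by_cases hB : 0 + 1 ≤ k ∧ k + 2 ≤ n
        · rw [if_pos hB, show k - 0 - 1 = 0 from by omega, h00] at h
          rw [show (0 + 0 + 1) = 0 + 1 from by omega] at h
          linear_combination h
        · rw [if_neg hB] at h
          rw [show (0 + 0 + 1) = 0 + 1 from by omega] at h
          linear_combination h
    | succ b ih =>
      intro h3 k hk
      have h := hmul 0 (b + 1) k (by omega) (by omega) hk
      rw [if_pos (by omega : 0 + (b + 1) + 3 ≤ n),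
        show (0 + (b + 1) + 1) = (b + 1) + 1 from by omega] at h
      rw [ih (by omega) (k - 0 - 1) (by omega)] at h
      by_cases hg : b + 1 + 1 < k ∧ k + 2 ≤ n
      · rw [if_pos hg]
        rw [if_pos (by omega : (b + 1) + 1 ≤ k ∧ k + 2 ≤ n),
          if_pos (by omega : 0 + 1 ≤ k ∧ k + 2 ≤ n),
          if_pos (by omega : b + 1 < k - 0 - 1 ∧ (k - 0 - 1) + 2 ≤ n),
          show k - (b + 1) - 1 = k - (b + 1 + 1) from by omega,
          show k - 0 - 1 - (b + 1) = k - (b + 1 + 1) from by omega] at h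
        push_cast at h ⊢
        linear_combination h
      · rw [if_neg hg]
        by_cases hB : 0 + 1 ≤ k ∧ k + 2 ≤ n
        · by_cases hA : (b + 1) + 1 ≤ k ∧ k + 2 ≤ n
          · rw [if_pos hA, if_pos hB,
              if_neg (by omega : ¬(b + 1 < k - 0 - 1 ∧ (k - 0 - 1) + 2 ≤ n)),
              show k - (b + 1) - 1 = 0 from by omega, h00] at h
            linear_combination h
          · rw [if_neg hA, if_pos hB,
              if_neg (by omega : ¬(b + 1 < k - 0 - 1 ∧ (k - 0 - 1) + 2 ≤ n))] at h
            linear_combination h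
        · rw [if_neg (by omega : ¬((b + 1) + 1 ≤ k ∧ k + 2 ≤ n)), if_neg hB] at h
          linear_combination h
  intro i k hi hk
  by_cases hi0 : i = 0
  · subst hi0
    rw [D_zero]
    by_cases hk0 : k = 0
    · subst hk0
      rw [if_neg (by omega), h00]
    · rw [if_pos (by omega)]
      simp only [hq]
      rw [if_neg hk0]
  · by_cases hi1 : i + 1 = n
    · rw [D_top q k hi0 hi1, show i = n - 1 from by omega, hcol k hk]
      split_ifs with h
      · simp [hq]
      · rfl
    · have h := hmid (i - 1) (by omega) k hk
      rw [show i - 1 + 1 = i from by omega] at h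
      rw [D_mid q k hi0 hi1, h]
      split_ifs with hc
      · simp only [hq]
        rw [if_neg (by omega : ¬(k - i = 0))]
        have hci : ((i - 1 : ℕ) : ℂ) = (i : ℂ) - 1 := by
          push_cast [Nat.cast_sub (by omega : 1 ≤ i)]
          ring
        rw [hci]
        ring
      · rfl

/-- For n > 3, the Lie algebra of derivations of the Poisson algebra `P₁,₂ⁿ`
has dimension `n`. -/
theorem stmt12 (n : ℕ) (hn : 3 < n) :
    Module.finrank ℂ ↥(derivs (mu11 n) (brA n)) = n := by
  have hinj : Function.Injective (Phi n) := by
    rw [injective_iff_map_eq_zero]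
    intro p hp
    have A : ∀ i k : Fin n, D n (pp p) (i : ℕ) (k : ℕ) = 0 := by
      intro i k
      have h : Phi n p (Pi.single i 1) k = 0 := by rw [hp]; rfl
      rw [Phi_single] at h
      exact h
    funext j
    by_cases j0 : (j : ℕ) = 0
    · have h : D n (pp p) (n - 1) (n - 1) = 0 := A ⟨n - 1, by omega⟩ ⟨n - 1, by omega⟩
      rw [D_top (pp p) (n - 1) (by omega) (by omega), if_pos (by omega)] at h
      have h2 : p ⟨0, by omega⟩ = 0 := by
        have h3 : pp p 0 = p ⟨0, by omega⟩ := by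
          simp only [pp]
          rw [dif_pos (by omega : 0 < n)]
        rw [← h3, h]
      rw [show j = ⟨0, by omega⟩ from Fin.ext j0, h2]
      rfl
    · have h : D n (pp p) 0 (j : ℕ) = 0 := A ⟨0, by omega⟩ j
      rw [D_zero, if_pos (by omega)] at h
      have h3 : pp p (j : ℕ) = p j := by
        simp only [pp]
        rw [dif_pos j.isLt]
      rw [← h3, h]
      rfl
  have hrange : LinearMap.range (Phi n) = derivs (mu11 n) (brA n) := by
    apply le_antisymm
    · rintro ψ ⟨p, rfl⟩
      exact Phi_mem hn p
    · intro φ hφ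
      obtain ⟨h1, h2⟩ := (mem_derivs_iff _ _ φ).mp hφ
      set d : ℕ → ℕ → ℂ := fun i k =>
        if h : i < n ∧ k < n then φ (Pi.single (⟨i, h.1⟩ : Fin n) 1) ⟨k, h.2⟩ else 0 with hdd
      have hd : ∀ (i k : Fin n), d (i : ℕ) (k : ℕ) = φ (Pi.single i 1) k := by
        intro i k
        simp only [hdd]
        rw [dif_pos (⟨i.isLt, k.isLt⟩ : (i : ℕ) < n ∧ (k : ℕ) < n)]
      have hmulF : ∀ a b k : Fin n,
          (if (a : ℕ) + (b : ℕ) + 3 ≤ n then d ((a : ℕ) + (b : ℕ) + 1) (k : ℕ) else 0)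
            = (if (b : ℕ) + 1 ≤ (k : ℕ) ∧ (k : ℕ) + 2 ≤ n then
                d (a : ℕ) ((k : ℕ) - (b : ℕ) - 1) else 0)
              + (if (a : ℕ) + 1 ≤ (k : ℕ) ∧ (k : ℕ) + 2 ≤ n then
                d (b : ℕ) ((k : ℕ) - (a : ℕ) - 1) else 0) := by
        intro a b k
        have H := congrFun (h1 a b) k
        rw [Pi.add_apply] at H
        have hL : φ (mu11 n (Pi.single a 1) (Pi.single b 1)) k
            = (if (a : ℕ) + (b : ℕ) + 3 ≤ n then d ((a : ℕ) + (b : ℕ) + 1) (k : ℕ) else 0) := by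
          rw [mu_single_single]
          split_ifs with h
          · exact (hd ⟨(a : ℕ) + (b : ℕ) + 1, by omega⟩ k).symm
          · rw [map_zero]; rfl
        have hR1 : mu11 n (φ (Pi.single a 1)) (Pi.single b 1) k
            = (if (b : ℕ) + 1 ≤ (k : ℕ) ∧ (k : ℕ) + 2 ≤ n then
                d (a : ℕ) ((k : ℕ) - (b : ℕ) - 1) else 0) := by
          rw [mu_single_right]
          split_ifs with h
          · exact (hd a ⟨(k : ℕ) - (b : ℕ) - 1, by have := k.isLt; omega⟩).symm
          · rfl
        have hR2 : mu11 n (Pi.single a 1) (φ (Pi.single b 1)) k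
            = (if (a : ℕ) + 1 ≤ (k : ℕ) ∧ (k : ℕ) + 2 ≤ n then
                d (b : ℕ) ((k : ℕ) - (a : ℕ) - 1) else 0) := by
          rw [mu_single_left]
          split_ifs with h
          · exact (hd b ⟨(k : ℕ) - (a : ℕ) - 1, by have := k.isLt; omega⟩).symm
          · rfl
        rw [hL, hR1, hR2] at H
        exact H
      have hbrF : ∀ a b k : Fin n,
          ((if (a : ℕ) = 0 ∧ (b : ℕ) + 1 = n then 1 else 0)
            - (if (a : ℕ) + 1 = n ∧ (b : ℕ) = 0 then 1 else 0) : ℂ) * d (n - 1) (k : ℕ)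
            = ((if (b : ℕ) + 1 = n ∧ (k : ℕ) + 1 = n then d (a : ℕ) 0 else 0)
                - (if (b : ℕ) = 0 ∧ (k : ℕ) + 1 = n then d (a : ℕ) (n - 1) else 0))
              + ((if (a : ℕ) = 0 ∧ (k : ℕ) + 1 = n then d (b : ℕ) (n - 1) else 0)
                - (if (a : ℕ) + 1 = n ∧ (k : ℕ) + 1 = n then d (b : ℕ) 0 else 0)) := by
        intro a b k
        have H := congrFun (h2 a b) k
        rw [Pi.add_apply] at H
        have hL : φ (brA n (Pi.single a 1) (Pi.single b 1)) k
            = ((if (a : ℕ) = 0 ∧ (b : ℕ) + 1 = n then 1 else 0)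
              - (if (a : ℕ) + 1 = n ∧ (b : ℕ) = 0 then 1 else 0) : ℂ) * d (n - 1) (k : ℕ) := by
          rw [br_single_single (by omega), map_smul, Pi.smul_apply, smul_eq_mul]
          exact congrArg _ (hd ⟨n - 1, by omega⟩ k).symm
        have hR1 : brA n (φ (Pi.single a 1)) (Pi.single b 1) k
            = ((if (b : ℕ) + 1 = n ∧ (k : ℕ) + 1 = n then d (a : ℕ) 0 else 0)
                - (if (b : ℕ) = 0 ∧ (k : ℕ) + 1 = n then d (a : ℕ) (n - 1) else 0)) := by
          rw [br_single_right (by omega)]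
          have e0 : φ (Pi.single a 1) ⟨0, by omega⟩ = d (a : ℕ) 0 := (hd a ⟨0, by omega⟩).symm
          have e1 : φ (Pi.single a 1) ⟨n - 1, by omega⟩ = d (a : ℕ) (n - 1) :=
            (hd a ⟨n - 1, by omega⟩).symm
          rw [e0, e1]
        have hR2 : brA n (Pi.single a 1) (φ (Pi.single b 1)) k
            = ((if (a : ℕ) = 0 ∧ (k : ℕ) + 1 = n then d (b : ℕ) (n - 1) else 0)
                - (if (a : ℕ) + 1 = n ∧ (k : ℕ) + 1 = n then d (b : ℕ) 0 else 0)) := by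
          rw [br_single_left (by omega)]
          have e0 : φ (Pi.single b 1) ⟨0, by omega⟩ = d (b : ℕ) 0 := (hd b ⟨0, by omega⟩).symm
          have e1 : φ (Pi.single b 1) ⟨n - 1, by omega⟩ = d (b : ℕ) (n - 1) :=
            (hd b ⟨n - 1, by omega⟩).symm
          rw [e0, e1]
        rw [hL, hR1, hR2] at H
        exact H
      have hmulN : ∀ a b k, a < n → b < n → k < n →
          (if a + b + 3 ≤ n then d (a + b + 1) k else 0)
            = (if b + 1 ≤ k ∧ k + 2 ≤ n then d a (k - b - 1) else 0)
              + (if a + 1 ≤ k ∧ k + 2 ≤ n then d b (k - a - 1) else 0) :=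
        fun a b k ha hb hk => hmulF ⟨a, ha⟩ ⟨b, hb⟩ ⟨k, hk⟩
      have hbrN : ∀ a b k, a < n → b < n → k < n →
          ((if a = 0 ∧ b + 1 = n then 1 else 0) - (if a + 1 = n ∧ b = 0 then 1 else 0) : ℂ)
              * d (n - 1) k
            = ((if b + 1 = n ∧ k + 1 = n then d a 0 else 0)
                - (if b = 0 ∧ k + 1 = n then d a (n - 1) else 0))
              + ((if a = 0 ∧ k + 1 = n then d b (n - 1) else 0)
                - (if a + 1 = n ∧ k + 1 = n then d b 0 else 0)) :=
        fun a b k ha hb hk => hbrF ⟨a, ha⟩ ⟨b, hb⟩ ⟨k, hk⟩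
      refine ⟨(fun j => if (j : ℕ) = 0 then d (n - 1) (n - 1) else d 0 (j : ℕ)), ?_⟩
      apply Module.Basis.ext (Pi.basisFun ℂ (Fin n))
      intro i
      rw [Pi.basisFun_apply, Phi_single]
      funext k
      have hrec := recon hn d hmulN hbrN (i : ℕ) (k : ℕ) i.isLt k.isLt
      show D n (pp fun j => if (j : ℕ) = 0 then d (n - 1) (n - 1) else d 0 (j : ℕ)) (i : ℕ) (k : ℕ)
        = φ (Pi.single i 1) k
      rw [← hd i k, hrec]
      exact D_congr (fun m hm => by
        simp only [pp]
        rw [dif_pos hm]) i.isLt k.isLt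
  rw [← hrange, LinearMap.finrank_range_of_inj hinj, Module.finrank_fin_fun]
end
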